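/- Call a rule flat if every argument of its head clause and of each of its body clauses is a variable or a literal, and call a fact flat if every argument in its argument list is a literal. If every rule of a DLS program P is flat, then every fact in the least fixed point of IC_P is flat, and every literal occurring as an argument of such a fact occurs in some rule of P. -/

import Mathlib

namespace DLS

/-! Datalog with first-class facts (DLS): basic syntax and semantics. -/

variable {Rel Lit Var : Type}

/-- A value is either a literal or a fact `R(v₁,…,vₙ)`. -/
inductive Val (Rel Lit : Type) : Type where
  | lit : Lit → Val Rel Lit
  | fact : Rel → List (Val Rel Lit) → Val Rel Lit

/-- A fact is a relation symbol applied to a finite list of values. -/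
abbrev Fact (Rel Lit : Type) : Type := Rel × List (Val Rel Lit)

/-- A database is a set of facts. -/
abbrev Database (Rel Lit : Type) : Type := Set (Fact Rel Lit)

def Fact.toVal (f : Fact Rel Lit) : Val Rel Lit := Val.fact f.1 f.2

mutual
/-- All subfacts of a value: `subfact(R(v₁,…,vₙ)) = {R(v₁,…,vₙ)} ∪ ⋃ᵢ subfact(vᵢ)`,
    and `subfact(v) = ∅` for a literal `v`. -/
def Val.subfacts : Val Rel Lit → Set (Fact Rel Lit)
  | .lit _ => ∅
  | .fact R args => insert (R, args) (Val.subfactsList args)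
def Val.subfactsList : List (Val Rel Lit) → Set (Fact Rel Lit)
  | [] => ∅
  | v :: vs => v.subfacts ∪ Val.subfactsList vs
end

/-- The `subfact` function on facts. -/
def Fact.subfact (f : Fact Rel Lit) : Set (Fact Rel Lit) :=
  Val.subfacts (Val.fact f.1 f.2)

/-- A database is subfact-closed if `db = ⋃ {subfact(f) | f ∈ db}`. -/
def SubfactClosed (db : Database Rel Lit) : Prop :=
  db = ⋃ f ∈ db, Fact.subfact f

/-- An argument of a clause: a variable, a literal, or a (sub)clause. -/
inductive Arg (Rel Lit Var : Type) : Type where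
  | var : Var → Arg Rel Lit Var
  | lit : Lit → Arg Rel Lit Var
  | clause : Rel → List (Arg Rel Lit Var) → Arg Rel Lit Var

/-- A clause is a relation symbol applied to a finite list of arguments. -/
abbrev Clause (Rel Lit Var : Type) : Type := Rel × List (Arg Rel Lit Var)

/-- A substitution maps variables to values. -/
abbrev Subst (Rel Lit Var : Type) : Type := Var → Val Rel Lit

mutual
/-- Applying a substitution to an argument yields a value. -/
def Arg.subst (θ : Subst Rel Lit Var) : Arg Rel Lit Var → Val Rel Lit
  | .var x => θ x
  | .lit l => .lit l
  | .clause R args => .fact R (Arg.substList θ args)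
def Arg.substList (θ : Subst Rel Lit Var) : List (Arg Rel Lit Var) → List (Val Rel Lit)
  | [] => []
  | a :: as => Arg.subst θ a :: Arg.substList θ as
end

/-- `c[θ]`: the fact obtained by substituting each variable of clause `c` by its image. -/
def Clause.subst (θ : Subst Rel Lit Var) (c : Clause Rel Lit Var) : Fact Rel Lit :=
  (c.1, Arg.substList θ c.2)

mutual
/-- The variables occurring in an argument. -/
def Arg.vars : Arg Rel Lit Var → Set Var
  | .var x => {x}
  | .lit _ => ∅
  | .clause _ args => Arg.varsList args
def Arg.varsList : List (Arg Rel Lit Var) → Set Var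
  | [] => ∅
  | a :: as => a.vars ∪ Arg.varsList as
end

/-- The variables occurring in a clause. -/
def Clause.vars (c : Clause Rel Lit Var) : Set Var := Arg.varsList c.2

mutual
/-- The literals occurring in an argument. -/
def Arg.lits : Arg Rel Lit Var → Set Lit
  | .var _ => ∅
  | .lit l => {l}
  | .clause _ args => Arg.litsList args
def Arg.litsList : List (Arg Rel Lit Var) → Set Lit
  | [] => ∅
  | a :: as => a.lits ∪ Arg.litsList as
end

/-- The literals occurring in a clause. -/
def Clause.lits (c : Clause Rel Lit Var) : Set Lit := Arg.litsList c.2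

/-- A rule has a head clause and a finite set of body clauses. -/
structure Rule (Rel Lit Var : Type) : Type where
  head : Clause Rel Lit Var
  body : Set (Clause Rel Lit Var)
  body_finite : body.Finite

/-- The literals occurring in a rule. -/
def Rule.lits (R : Rule Rel Lit Var) : Set Lit :=
  R.head.lits ∪ ⋃ c ∈ R.body, c.lits

/-- A rule is well-scoped if every variable of the head occurs in the body. -/
def Rule.WellScoped (R : Rule Rel Lit Var) : Prop :=
  R.head.vars ⊆ ⋃ c ∈ R.body, c.vars

/-- Immediate consequence of a rule:
    `IC_R(db) = db ∪ ⋃ { subfact(Head(R)[θ]) | θ with Body(R)[θ] ⊆ db }`. -/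
def Rule.IC (R : Rule Rel Lit Var) (db : Database Rel Lit) : Database Rel Lit :=
  db ∪ ⋃ (θ : Subst Rel Lit Var) (_ : ∀ c ∈ R.body, Clause.subst θ c ∈ db),
      Fact.subfact (Clause.subst θ R.head)

/-- A DLS program is a finite set of well-scoped rules. -/
structure Program (Rel Lit Var : Type) : Type where
  rules : Set (Rule Rel Lit Var)
  rules_finite : rules.Finite
  wellScoped : ∀ R ∈ rules, R.WellScoped

/-- Immediate consequence of a program: `IC_P(db) = db ∪ ⋃_{R ∈ P} IC_R(db)`. -/
def Program.IC (P : Program Rel Lit Var) (db : Database Rel Lit) : Database Rel Lit :=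
  db ∪ ⋃ R ∈ P.rules, R.IC db

theorem Rule.IC_mono (R : Rule Rel Lit Var) : Monotone R.IC := by
  intro a b hab x hx
  rcases hx with hx | hx
  · exact Or.inl (hab hx)
  · right
    simp only [Set.mem_iUnion] at hx ⊢
    obtain ⟨θ, hθ, hm⟩ := hx
    exact ⟨θ, fun c hc => hab (hθ c hc), hm⟩

theorem Program.IC_mono (P : Program Rel Lit Var) : Monotone P.IC := by
  intro a b hab x hx
  rcases hx with hx | hx
  · exact Or.inl (hab hx)
  · right
    simp only [Set.mem_iUnion] at hx ⊢
    obtain ⟨R, hR, hm⟩ := hx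
    exact ⟨R, hR, R.IC_mono hab hm⟩

/-- The immediate consequence operator `IC_P`, as a monotone map on the complete
    lattice of databases ordered by inclusion. Its least fixed point is
    `OrderHom.lfp P.ICHom`. -/
def Program.ICHom (P : Program Rel Lit Var) : Database Rel Lit →o Database Rel Lit :=
  ⟨P.IC, P.IC_mono⟩

/-- `I ⊨ R`: for every substitution θ, `Body(R)[θ] ⊆ I` implies `Head(R)[θ] ∈ I`. -/
def Models (I : Database Rel Lit) (R : Rule Rel Lit Var) : Prop :=
  ∀ θ : Subst Rel Lit Var, (∀ c ∈ R.body, Clause.subst θ c ∈ I) → Clause.subst θ R.head ∈ I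

/-- A Herbrand model of `P` is a subfact-closed database satisfying every rule of `P`. -/
def HerbrandModel (P : Program Rel Lit Var) (I : Database Rel Lit) : Prop :=
  SubfactClosed I ∧ ∀ R ∈ P.rules, Models I R

/-- An argument is flat if it is a variable or a literal (not a nested clause). -/
def Arg.IsFlat : Arg Rel Lit Var → Prop
  | .clause _ _ => False
  | _ => True

/-- A clause is flat if every argument is a variable or a literal. -/
def Clause.Flat (c : Clause Rel Lit Var) : Prop := ∀ a ∈ c.2, a.IsFlat

/-- A rule is flat if its head clause and all its body clauses are flat. -/
def Rule.Flat (R : Rule Rel Lit Var) : Prop := R.head.Flat ∧ ∀ c ∈ R.body, c.Flat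

/-- A fact is flat if every argument in its argument list is a literal. -/
def Fact.Flat (f : Fact Rel Lit) : Prop := ∀ v ∈ f.2, ∃ l : Lit, v = Val.lit l

/-- `natFact z s n` encodes the natural number `n` as the fact
    `s(s(...(z())...))` with `n` applications of `s`. -/
def natFact (z s : Rel) : ℕ → Fact Rel Lit
  | 0 => (z, [])
  | n + 1 => (s, [(natFact z s n).toVal])

/-!
Let `L` be the set of literals occurring in the rules of `P`, and call a fact `L`-ground if each
of its arguments is a literal from `L`. `L`-ground facts are their own only subfacts, and when a
flat, well-scoped rule fires on `L`-ground body facts, every head variable occurs as an argument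
of some body clause, so it is instantiated by a literal of `L`; the head fact is again
`L`-ground. Hence the `L`-ground facts form a prefixed point of `IC_P`, which contains the least
fixed point.
-/

theorem Arg.substList_eq_map (θ : Subst Rel Lit Var) :
    ∀ args : List (Arg Rel Lit Var), Arg.substList θ args = args.map (Arg.subst θ)
  | [] => rfl
  | a :: as => by rw [Arg.substList, Arg.substList_eq_map θ as, List.map_cons]

theorem Arg.mem_varsList {x : Var} :
    ∀ {args : List (Arg Rel Lit Var)}, x ∈ Arg.varsList args ↔ ∃ a ∈ args, x ∈ a.vars
  | [] => by simp [Arg.varsList]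
  | a :: as => by simp [Arg.varsList, Arg.mem_varsList (args := as)]

theorem Arg.mem_litsList {l : Lit} :
    ∀ {args : List (Arg Rel Lit Var)}, l ∈ Arg.litsList args ↔ ∃ a ∈ args, l ∈ a.lits
  | [] => by simp [Arg.litsList]
  | a :: as => by simp [Arg.litsList, Arg.mem_litsList (args := as)]

theorem Arg.IsFlat.eq_var_of_mem_vars {a : Arg Rel Lit Var} (ha : a.IsFlat) {x : Var}
    (hx : x ∈ a.vars) : a = .var x := by
  cases a with
  | var y => rw [Arg.vars, Set.mem_singleton_iff] at hx; rw [hx]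
  | lit _ => exact absurd hx (Set.notMem_empty x)
  | clause _ _ => exact ha.elim

theorem Val.subfactsList_eq_empty :
    ∀ {vs : List (Val Rel Lit)}, (∀ v ∈ vs, ∃ l : Lit, v = .lit l) →
      Val.subfactsList vs = ∅
  | [], _ => rfl
  | v :: vs, h => by
    obtain ⟨l, rfl⟩ := h v List.mem_cons_self
    rw [Val.subfactsList, Val.subfacts, Val.subfactsList_eq_empty fun w hw ↦ h w
      (List.mem_cons_of_mem _ hw), Set.empty_union]

theorem Fact.subfact_eq_singleton_of_flat {f : Fact Rel Lit} (hf : f.Flat) :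
    f.subfact = {f} := by
  rw [Fact.subfact, Val.subfacts, Val.subfactsList_eq_empty hf, LawfulSingleton.insert_empty_eq]

def groundFacts (L : Set Lit) : Database Rel Lit :=
  {f | ∀ v ∈ f.2, ∃ l ∈ L, v = .lit l}

theorem Fact.flat_of_mem_groundFacts {L : Set Lit} {f : Fact Rel Lit}
    (hf : f ∈ groundFacts L) : f.Flat :=
  fun v hv ↦ (hf v hv).imp fun _ hl ↦ hl.2

theorem mem_of_lit_mem_groundFacts {L : Set Lit} {f : Fact Rel Lit}
    (hf : f ∈ groundFacts L) {l : Lit} (hl : Val.lit l ∈ f.2) : l ∈ L := by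
  obtain ⟨l', hl', heq⟩ := hf _ hl
  rwa [Val.lit.inj heq]

def Program.lits (P : Program Rel Lit Var) : Set Lit := ⋃ R ∈ P.rules, R.lits

theorem Rule.subst_head_mem_groundFacts {R : Rule Rel Lit Var} (hR : R.Flat)
    (hscoped : R.WellScoped) {L : Set Lit} (hL : R.lits ⊆ L) {θ : Subst Rel Lit Var}
    (hbody : ∀ c ∈ R.body, Clause.subst θ c ∈ groundFacts L) :
    Clause.subst θ R.head ∈ groundFacts L := by
  intro v hv
  rw [Clause.subst, Arg.substList_eq_map, List.mem_map] at hv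
  obtain ⟨a, ha, rfl⟩ := hv
  cases a with
  | lit l => exact ⟨l, hL (Or.inl (Arg.mem_litsList.2 ⟨_, ha, rfl⟩)), rfl⟩
  | clause _ _ => exact (hR.1 _ ha).elim
  | var x =>
    have hx : x ∈ ⋃ c ∈ R.body, c.vars := hscoped (Arg.mem_varsList.2 ⟨_, ha, rfl⟩)
    simp only [Set.mem_iUnion] at hx
    obtain ⟨c, hc, hxc⟩ := hx
    obtain ⟨b, hb, hxb⟩ := Arg.mem_varsList.1 hxc
    rw [(hR.2 c hc _ hb).eq_var_of_mem_vars hxb] at hb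
    refine hbody c hc _ ?_
    rw [Clause.subst, Arg.substList_eq_map]
    exact List.mem_map_of_mem hb

theorem Program.IC_groundFacts_subset {P : Program Rel Lit Var}
    (hflat : ∀ R ∈ P.rules, R.Flat) :
    P.IC (groundFacts P.lits) ⊆ groundFacts P.lits := by
  rintro f (hf | hf)
  · exact hf
  simp only [Set.mem_iUnion] at hf
  obtain ⟨R, hR, hf | hf⟩ := hf
  · exact hf
  simp only [Set.mem_iUnion] at hf
  obtain ⟨θ, hbody, hf⟩ := hf
  have hhead := Rule.subst_head_mem_groundFacts (hflat R hR) (P.wellScoped R hR)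
    (Set.subset_biUnion_of_mem (u := Rule.lits) hR) hbody
  rw [Fact.subfact_eq_singleton_of_flat (Fact.flat_of_mem_groundFacts hhead),
    Set.mem_singleton_iff] at hf
  exact hf ▸ hhead

/-- if every rule of a DLS program `P` is flat, then every fact
in the least fixed point of `IC_P` is flat, and every literal occurring as an
argument of such a fact occurs in some rule of `P`. -/
theorem flat_program_lfp_facts_flat {Rel Lit Var : Type} (P : Program Rel Lit Var)
    (hflat : ∀ R ∈ P.rules, R.Flat) :
    ∀ f ∈ OrderHom.lfp P.ICHom, Fact.Flat f ∧
      ∀ l : Lit, Val.lit l ∈ f.2 → ∃ R ∈ P.rules, l ∈ R.lits := by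
  intro f hf
  have hground : f ∈ groundFacts P.lits :=
    OrderHom.lfp_le P.ICHom (Program.IC_groundFacts_subset hflat) hf
  refine ⟨Fact.flat_of_mem_groundFacts hground, fun l hl ↦ ?_⟩
  simpa only [Program.lits, Set.mem_iUnion, exists_prop] using
    mem_of_lit_mem_groundFacts hground hl

end DLS
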